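/- The subgroup Γ_V(2) of SL(2,ℤ) is generated by the two matrices V = [[0,-1],[1,0]] and T = [[1,2],[0,1]]: every matrix A ∈ SL(2,ℤ) with both products d₁·d₂ and d₃·d₄ of its entries even is a finite product of V, T and their inverses. -/

import Mathlib

/-!
For `A = [[a, b], [c, d]]` in `Γ_V(2)` the sum `a + c` is odd, since otherwise `ad - bc = 1` would
be even. Left multiplication by `T ^ k` replaces `a` by `a + 2kc`, and by `V` turns the first
column `(a, c)` into `(-c, a)`; both preserve `Γ_V(2)`. As `a + c` is odd, some `a + 2kc` has
absolute value below `|c|`, so `V * T ^ k * A` has a smaller lower-left entry. Descent on `|c|`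
ends at `c = 0`, where `A = ±T ^ k` and `-1 = V ^ 2`.
-/

/-- `SL(2, ℤ)`: the group of 2×2 integer matrices of determinant 1. -/
abbrev SL2Z := Matrix.SpecialLinearGroup (Fin 2) ℤ

/-- `V = [[0,-1],[1,0]]` as an element of `SL(2,ℤ)`. -/
def V : SL2Z := ⟨!![0, -1; 1, 0], by norm_num [Matrix.det_fin_two_of]⟩

/-- `T = [[1,2],[0,1]]` as an element of `SL(2,ℤ)`. -/
def T : SL2Z := ⟨!![1, 2; 0, 1], by norm_num [Matrix.det_fin_two_of]⟩

/-- Take `k = -q` for `a + |c| = 2cq + r` with `0 ≤ r < 2|c|`: then `a + 2kc = r - |c|`, and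
`r ≠ 0` because `a + c` is odd. -/
theorem Int.exists_natAbs_add_two_mul_mul_lt {a c : ℤ} (hc : c ≠ 0) (h : Odd (a + c)) :
    ∃ k : ℤ, (a + 2 * k * c).natAbs < c.natAbs := by
  set q := (a + c.natAbs) / (2 * c)
  set r := (a + c.natAbs) % (2 * c)
  have hdiv : r + 2 * c * q = a + c.natAbs := Int.emod_add_mul_ediv _ _
  have hr_nonneg : 0 ≤ r := Int.emod_nonneg _ (by omega)
  have hr_lt : r < (2 * c).natAbs := Int.emod_lt _ (by omega)
  have hq : 2 * c * q = 2 * (c * q) := by ring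
  obtain ⟨m, hm⟩ := h
  refine ⟨-q, ?_⟩
  have : a + 2 * -q * c = r - c.natAbs := by linear_combination -hdiv
  omega

lemma coe_V_mul (A : SL2Z) :
    ((V * A : SL2Z) : Matrix (Fin 2) (Fin 2) ℤ) = !![-A 1 0, -A 1 1; A 0 0, A 0 1] := by
  rw [Matrix.SpecialLinearGroup.coe_mul, Matrix.eta_fin_two (A : Matrix (Fin 2) (Fin 2) ℤ)]
  simp [V]

lemma V_sq : V ^ 2 = -1 := by
  ext i j
  rw [sq, coe_V_mul]
  fin_cases i <;> fin_cases j <;> simp [V]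

lemma T_eq_sq : T = ModularGroup.T ^ 2 := by
  ext i j
  fin_cases i <;> fin_cases j <;> simp [T, sq, ModularGroup.coe_T]

lemma coe_T_zpow (k : ℤ) : ((T ^ k : SL2Z) : Matrix (Fin 2) (Fin 2) ℤ) = !![1, 2 * k; 0, 1] := by
  rw [T_eq_sq, ← zpow_natCast, ← zpow_mul, ModularGroup.coe_T_zpow]
  norm_num

lemma coe_T_zpow_mul (k : ℤ) (A : SL2Z) :
    ((T ^ k * A : SL2Z) : Matrix (Fin 2) (Fin 2) ℤ) =
      !![A 0 0 + 2 * k * A 1 0, A 0 1 + 2 * k * A 1 1; A 1 0, A 1 1] := by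
  rw [Matrix.SpecialLinearGroup.coe_mul, coe_T_zpow,
    Matrix.eta_fin_two (A : Matrix (Fin 2) (Fin 2) ℤ)]
  simp

lemma V_mem_closure : V ∈ Subgroup.closure ({V, T} : Set SL2Z) :=
  Subgroup.subset_closure (by simp)

lemma T_mem_closure : T ∈ Subgroup.closure ({V, T} : Set SL2Z) :=
  Subgroup.subset_closure (by simp)

/-- Membership in `Γ_V(2)`. -/
def IsGammaV2 (A : SL2Z) : Prop :=
  Even (A 0 0 * A 0 1) ∧ Even (A 1 0 * A 1 1)

namespace IsGammaV2

variable {A : SL2Z}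

lemma V_mul (hA : IsGammaV2 A) : IsGammaV2 (V * A) := by
  rw [IsGammaV2, coe_V_mul]
  simpa using hA.symm

lemma T_zpow_mul (hA : IsGammaV2 A) (k : ℤ) : IsGammaV2 (T ^ k * A) := by
  obtain ⟨⟨m, hm⟩, h₁⟩ := hA
  rw [IsGammaV2, coe_T_zpow_mul]
  refine ⟨⟨m + k * (A 0 0 * A 1 1 + A 1 0 * A 0 1) + 2 * k ^ 2 * A 1 0 * A 1 1, ?_⟩, by simpa⟩
  simp only [Matrix.of_apply, Matrix.cons_val', Matrix.cons_val_zero, Matrix.cons_val_one,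
    Matrix.empty_val', Matrix.cons_val_fin_one]
  linear_combination hm

lemma odd_add (hA : IsGammaV2 A) : Odd (A 0 0 + A 1 0) := by
  have hdet := A.det_coe
  rw [Matrix.det_fin_two] at hdet
  by_contra h
  rw [Int.not_odd_iff_even, Int.even_add] at h
  have hdet_even : Even (A 0 0 * A 1 1 - A 0 1 * A 1 0) := by
    rcases Int.even_or_odd (A 0 0) with ha | ha
    · exact (ha.mul_right _).sub ((h.mp ha).mul_left _)
    · have ha' := Int.not_even_iff_odd.mpr ha
      have hb : Even (A 0 1) := (Int.even_mul.mp hA.1).resolve_left ha'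
      have hd : Even (A 1 1) := (Int.even_mul.mp hA.2).resolve_left (mt h.mpr ha')
      exact (hd.mul_left _).sub (hb.mul_right _)
  rw [hdet] at hdet_even
  exact Int.not_even_one hdet_even

lemma mem_closure_of_apply_one_zero_eq_zero (hA : IsGammaV2 A) (hc : A 1 0 = 0) :
    A ∈ Subgroup.closure ({V, T} : Set SL2Z) := by
  have hdet := A.det_coe
  rw [Matrix.det_fin_two, hc, mul_zero, sub_zero] at hdet
  have ha : ¬Even (A 0 0) := Int.not_even_iff_odd.mpr (Int.odd_mul.mp (hdet ▸ odd_one)).1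
  obtain ⟨m, hm⟩ := (Int.even_mul.mp hA.1).resolve_left ha
  rcases Int.eq_one_or_neg_one_of_mul_eq_one' hdet with ⟨ha, hd⟩ | ⟨ha, hd⟩
  · have hA : A = T ^ m := by
      ext i j
      fin_cases i <;> fin_cases j <;> simp [coe_T_zpow, ha, hc, hd, hm, two_mul]
    exact hA ▸ zpow_mem T_mem_closure m
  · have hA : A = V ^ 2 * T ^ (-m) := by
      ext i j
      fin_cases i <;> fin_cases j <;> simp [V_sq, coe_T_zpow, ha, hc, hd, hm, two_mul]
    exact hA ▸ mul_mem (pow_mem V_mem_closure 2) (zpow_mem T_mem_closure (-m))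

theorem mem_closure (hA : IsGammaV2 A) : A ∈ Subgroup.closure ({V, T} : Set SL2Z) := by
  induction hn : (A 1 0).natAbs using Nat.strong_induction_on generalizing A with
  | _ n ih =>
  by_cases hc : A 1 0 = 0
  · exact hA.mem_closure_of_apply_one_zero_eq_zero hc
  obtain ⟨k, hk⟩ := Int.exists_natAbs_add_two_mul_mul_lt hc hA.odd_add
  have hB : (V * (T ^ k * A)) 1 0 = A 0 0 + 2 * k * A 1 0 := by
    rw [coe_V_mul, coe_T_zpow_mul]; simp
  have hB_mem := ih _ (hn ▸ hB ▸ hk) (hA.T_zpow_mul k).V_mul rfl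
  have hA : A = (T ^ k)⁻¹ * V⁻¹ * (V * (T ^ k * A)) := by group
  rw [hA]
  exact mul_mem (mul_mem (inv_mem (zpow_mem T_mem_closure k)) (inv_mem V_mem_closure)) hB_mem

end IsGammaV2

/-- Every matrix `A = [[d₁,d₂],[d₃,d₄]] ∈ SL(2,ℤ)` with both products `d₁·d₂` and `d₃·d₄`
even lies in the subgroup generated by `V` and `T`, i.e. is a finite product of
`V`, `T` and their inverses. -/
theorem gammaV_generated_by_V_T (A : SL2Z)
    (h1 : Even ((A : Matrix (Fin 2) (Fin 2) ℤ) 0 0 * (A : Matrix (Fin 2) (Fin 2) ℤ) 0 1))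
    (h2 : Even ((A : Matrix (Fin 2) (Fin 2) ℤ) 1 0 * (A : Matrix (Fin 2) (Fin 2) ℤ) 1 1)) :
    A ∈ Subgroup.closure ({V, T} : Set SL2Z) :=
  IsGammaV2.mem_closure ⟨h1, h2⟩
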